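/- (Entropy-constrained optimal univariate functional distortion, eq. (26).) Let X have density f_X and g be a computation with sensitivity γ(x) = |g′(x)|, with 0 < ∫_ℝ γ(x) dx < ∞. Define λ*(x) = γ(x)/∫_ℝ γ(t) dt, and assume f_X, g, λ* satisfy (UF1′)–(UF4′). Then the compander quantizers Q_{K,λ*} satisfy lim_{K→∞} K² · E[|g(X) − g(Q_{K,λ*}(X))|²] = (1/12) (∫_ℝ γ(x) dx)². -/

import Mathlib

open MeasureTheory Filter Set
open scoped Topology

noncomputable section

/-- A compressor: a strictly increasing `C¹` bijection from `ℝ` onto `(0,1)` whose derivative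
(the point density) integrates to `1`. -/
def IsCompressor (c : ℝ → ℝ) : Prop :=
  StrictMono c ∧ ContDiff ℝ 1 c ∧ Set.range c = Set.Ioo (0 : ℝ) 1 ∧
    (∫ x : ℝ, deriv c x) = 1

/-- `p` gives the cell boundaries of the `K`-level compander quantizer for compressor `c`:
`p k = c⁻¹ (k / K)` for `1 ≤ k ≤ K - 1`. -/
def IsBoundaries (c : ℝ → ℝ) (K : ℕ) (p : ℕ → ℝ) : Prop :=
  ∀ k : ℕ, 1 ≤ k → k ≤ K - 1 → c (p k) = (k : ℝ) / (K : ℝ)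

/-- `Q` is the `K`-level compander quantizer with cell boundaries `p`: the codewords are the
midpoints of the interior cells, together with `p 1` and `p (K-1)` for the two overload cells. -/
def IsCompanderQuantizer (K : ℕ) (p : ℕ → ℝ) (Q : ℝ → ℝ) : Prop :=
  (∀ x ≤ p 1, Q x = p 1) ∧
  (∀ x, p (K - 1) < x → Q x = p (K - 1)) ∧
  (∀ k : ℕ, 2 ≤ k → k ≤ K - 1 → ∀ x ∈ Set.Ioc (p (k - 1)) (p k),
      Q x = (p (k - 1) + p k) / 2)

/-!
The point density `c' = |g'| / ∫ |g'|` is Lipschitz and `f / c' ^ 4` is integrable (UF3′); near a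
zero of `c'` this quotient would dominate a multiple of `|x - a|⁻¹`, so `g'` never vanishes, `g` is
monotone, and `|g v - g u|` is the integral of `|g'|` between `u` and `v`.

The distortion splits into the two overload cells and the `K - 2` granular cells. Each overload
cell has `c'`-mass `1/K`, so (UF4′) makes its contribution `o(1/K²)`. A granular cell `[A, B]`
has `∫_A^B |g'| = I / K` with `I = ∫ |g'|`. If `|g'|` and `f` vary on it at most by a factor `r`,
then `12 K²` times its distortion and `I² ∫_A^B f` both lie within the factor `r³` above
`K² a² b (B - A)³`, where `a` and `b` are the minima of `|g'|` and `f` on the cell. On a compact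
set `|g'|` and `f` are bounded below and uniformly continuous, so for large `K` every cell meeting
`[-M, M]` is short enough for this, while the other cells carry at most the mass of `f` outside
`[-M, M]`. Hence `K² D(K) → I² / 12`.
-/

lemma exists_zero_Ioc_ne_zero {φ : ℝ → ℝ} (hφ : Continuous φ) {x₀ w : ℝ} (h0 : φ x₀ = 0)
    (hx₀ : x₀ ≤ w) : ∃ a ≤ w, φ a = 0 ∧ ∀ x ∈ Ioc a w, φ x ≠ 0 := by
  set Z := {x | φ x = 0} ∩ Iic w
  have hZ : IsClosed Z := (isClosed_eq hφ continuous_const).inter isClosed_Iic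
  have hbdd : BddAbove Z := ⟨w, fun _ hz => hz.2⟩
  obtain ⟨ha0, haw⟩ := hZ.csSup_mem ⟨x₀, h0, hx₀⟩ hbdd
  exact ⟨sSup Z, haw, ha0, fun x hx hx0 => (le_csSup hbdd ⟨hx0, hx.2⟩).not_gt hx.1⟩

lemma exists_zero_uIoc_ne_zero {φ : ℝ → ℝ} (hφ : Continuous φ) {x₀ w : ℝ} (h0 : φ x₀ = 0) :
    ∃ a, φ a = 0 ∧ ∀ x ∈ uIoc a w, x ≠ a → φ x ≠ 0 := by
  rcases le_total x₀ w with hx₀ | hx₀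
  · obtain ⟨a, haw, ha0, ha⟩ := exists_zero_Ioc_ne_zero hφ h0 hx₀
    exact ⟨a, ha0, fun x hx _ => ha x (by rwa [uIoc_of_le haw] at hx)⟩
  · obtain ⟨a, haw, ha0, ha⟩ := exists_zero_Ioc_ne_zero (hφ.comp continuous_neg)
      (x₀ := -x₀) (by simpa using h0) (neg_le_neg hx₀)
    refine ⟨-a, ha0, fun x hx hxa => ?_⟩
    rw [uIoc_of_ge (le_neg_of_le_neg haw)] at hx
    simpa using ha (-x) ⟨lt_neg_of_lt_neg (lt_of_le_of_ne hx.2 hxa), neg_le_neg hx.1.le⟩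

lemma inv_abs_sub_le_mul_abs_div_pow {f φ : ℝ → ℝ} {C δ a w x : ℝ} {n : ℕ} (hn : n ≠ 0)
    (hφ : ∀ x y, |φ x - φ y| ≤ C * |x - y|) (ha : φ a = 0) (hx : x ∈ uIcc a w) (hφx : φ x ≠ 0)
    (hδ : 0 < δ) (hfx : δ ≤ f x) :
    |x - a|⁻¹ ≤ C * (C * |w - a|) ^ (n - 1) / δ * |f x / φ x ^ n| := by
  have hxa : 0 < |x - a| := abs_pos.2 (sub_ne_zero.2 fun h => hφx (h ▸ ha))
  have hlip : |φ x| ≤ C * |x - a| := by simpa [ha] using hφ x a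
  have hC : 0 < C := pos_of_mul_pos_left ((abs_pos.2 hφx).trans_le hlip) hxa.le
  have hpow : |φ x| ^ n ≤ C * (C * |w - a|) ^ (n - 1) * |x - a| := calc
    |φ x| ^ n = |φ x| ^ (n - 1) * |φ x| := (pow_sub_one_mul hn _).symm
    _ ≤ (C * |w - a|) ^ (n - 1) * (C * |x - a|) := by
      gcongr
      exact hlip.trans (mul_le_mul_of_nonneg_left (abs_sub_left_of_mem_uIcc hx) hC.le)
    _ = C * (C * |w - a|) ^ (n - 1) * |x - a| := by ring
  rw [abs_div, abs_of_pos (hδ.trans_le hfx), abs_pow, inv_le_iff_one_le_mul₀ hxa, mul_comm]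
  have hφn : 0 < |φ x| ^ n := pow_pos (abs_pos.2 hφx) n
  calc 1 ≤ C * (C * |w - a|) ^ (n - 1) * |x - a| / |φ x| ^ n := by rwa [one_le_div hφn]
    _ = |x - a| * (C * (C * |w - a|) ^ (n - 1) / δ * (δ / |φ x| ^ n)) := by field_simp
    _ ≤ _ := by gcongr

/-- Near a zero `a` of `φ` with no other zero between `a` and `w`, `|f / φ ^ n|` dominates a
multiple of `|x - a|⁻¹`, which is not integrable. -/
theorem ne_zero_of_integrable_div_pow {f φ : ℝ → ℝ} {C : ℝ} {n : ℕ} (hn : n ≠ 0)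
    (hφ : ∀ x y, |φ x - φ y| ≤ C * |x - y|) (hf : Continuous f) (hfpos : ∀ x, 0 < f x)
    (hint : Integrable fun x => f x / φ x ^ n) {w : ℝ} (hw : φ w ≠ 0) (x₀ : ℝ) :
    φ x₀ ≠ 0 := by
  intro h0
  have hC : 0 < C := by
    have := hφ w x₀
    rw [h0, sub_zero] at this
    exact pos_of_mul_pos_left ((abs_pos.2 hw).trans_le this) (abs_nonneg _)
  have hcont : Continuous φ := (LipschitzWith.of_dist_le_mul (K := ⟨C, hC.le⟩) fun x y => by
    rw [Real.dist_eq, Real.dist_eq]; exact hφ x y).continuous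
  obtain ⟨a, ha0, hgap⟩ := exists_zero_uIoc_ne_zero hcont h0 (w := w)
  have haw : a ≠ w := fun h => hw (h ▸ ha0)
  obtain ⟨δ, hδ, hfδ⟩ := isCompact_uIcc.exists_forall_le' hf.continuousOn
    (fun x _ => hfpos x) (a := 0) (s := uIcc a w)
  set P := C * (C * |w - a|) ^ (n - 1)
  have hbound : ∀ x ∈ uIoc a w, ‖(x - a)⁻¹‖ ≤ P / δ * ‖f x / φ x ^ n‖ := by
    intro x hx
    rcases eq_or_ne x a with rfl | hxa
    · simp only [sub_self, inv_zero, norm_zero]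
      positivity
    simp only [norm_inv, Real.norm_eq_abs]
    exact inv_abs_sub_le_mul_abs_div_pow hn hφ ha0 (uIoc_subset_uIcc hx) (hgap x hx hxa) hδ
      (hfδ x (uIoc_subset_uIcc hx))
  have hii : IntervalIntegrable (fun x => (x - a)⁻¹) volume a w := by
    rw [intervalIntegrable_iff]
    refine (hint.norm.const_mul (P / δ)).integrableOn.mono' ?_ ?_
    · exact (measurable_id.sub_const a).inv.aestronglyMeasurable
    · exact (ae_restrict_iff' measurableSet_uIoc).2 (ae_of_all _ hbound)
  rcases intervalIntegrable_sub_inv_iff.1 hii with h | h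
  · exact haw h
  · exact h left_mem_uIcc

lemma abs_sub_eq_abs_integral_abs_deriv {g : ℝ → ℝ} (hg : Differentiable ℝ g)
    (hg' : Continuous (deriv g)) (hne : ∀ x, deriv g x ≠ 0) (u v : ℝ) :
    |g v - g u| = |(∫ t in u..v, |deriv g t|)| := by
  rw [← intervalIntegral.integral_deriv_eq_sub' g rfl (fun x _ => hg x) hg'.continuousOn]
  rcases isPreconnected_univ.eq_or_eq_neg_of_sq_eq hg'.abs.continuousOn hg'.continuousOn
    (fun x _ => by simp [sq_abs]) (fun _ => hne _) with h | h <;>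
  simp only [EqOn, mem_univ, true_implies] at h <;> simp [h]

section Compressor

variable {c : ℝ → ℝ} {K : ℕ} {q : ℕ → ℝ}

lemma tendsto_atTop_of_range_eq_Ioo (hc : Monotone c) (hrange : range c = Ioo 0 1) :
    Tendsto c atTop (𝓝 1) := by
  have h := tendsto_atTop_ciSup hc (by rw [hrange]; exact bddAbove_Ioo)
  rwa [iSup, hrange, csSup_Ioo zero_lt_one] at h

lemma tendsto_atBot_of_range_eq_Ioo (hc : Monotone c) (hrange : range c = Ioo 0 1) :
    Tendsto c atBot (𝓝 0) := by
  have h := tendsto_atBot_ciInf hc (by rw [hrange]; exact bddBelow_Ioo)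
  rwa [iInf, hrange, csInf_Ioo zero_lt_one] at h

lemma IsBoundaries.monotoneOn (hc : StrictMono c) (hq : IsBoundaries c K q) :
    MonotoneOn q (Icc 1 (K - 1)) := by
  intro j hj k hk hjk
  rw [← hc.le_iff_le, hq j hj.1 hj.2, hq k hk.1 hk.2]
  gcongr

lemma IsBoundaries.sub_eq (hq : IsBoundaries c K q) {j : ℕ} (hj : j + 2 ≤ K - 1) :
    c (q (j + 2)) - c (q (j + 1)) = 1 / K := by
  rw [hq _ (by omega) hj, hq _ (by omega) (by omega)]
  push_cast
  ring

lemma IsBoundaries.apply_one (hq : IsBoundaries c K q) (hK : 2 ≤ K) : c (q 1) = 1 / K := by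
  simpa using hq 1 le_rfl (by omega)

lemma IsBoundaries.one_sub_apply_last (hq : IsBoundaries c K q) (hK : 2 ≤ K) :
    1 - c (q (K - 1)) = 1 / K := by
  have hK0 : (K : ℝ) ≠ 0 := by exact_mod_cast (by omega : K ≠ 0)
  rw [hq _ (by omega) le_rfl, Nat.cast_sub (by omega : 1 ≤ K)]
  field_simp
  ring

variable {p : ℕ → ℕ → ℝ}

lemma tendsto_boundary_one_atBot (hc : StrictMono c) (hc0 : ∀ x, 0 < c x)
    (hp : ∀ K, 3 ≤ K → IsBoundaries c K (p K)) : Tendsto (fun K => p K 1) atTop atBot := by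
  refine tendsto_atBot.2 fun M => ?_
  filter_upwards [eventually_ge_atTop 3,
    tendsto_one_div_atTop_nhds_zero_nat.eventually (gt_mem_nhds (hc0 M))] with K hK hKM
  rw [← hc.le_iff_le, (hp K hK).apply_one (by omega)]
  exact hKM.le

lemma tendsto_boundary_last_atTop (hc : StrictMono c) (hc1 : ∀ x, c x < 1)
    (hp : ∀ K, 3 ≤ K → IsBoundaries c K (p K)) : Tendsto (fun K => p K (K - 1)) atTop atTop := by
  refine tendsto_atTop.2 fun M => ?_
  filter_upwards [eventually_ge_atTop 3, tendsto_one_div_atTop_nhds_zero_nat.eventually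
    (gt_mem_nhds (sub_pos.2 (hc1 M)))] with K hK hKM
  rw [← hc.le_iff_le]
  linarith [(hp K hK).one_sub_apply_last (by omega)]

lemma tendsto_sq_mul_overload_right {N : ℝ → ℝ} (hc : StrictMono c)
    (hcd : Differentiable ℝ c) (hrange : range c = Ioo 0 1) (hc' : Integrable (deriv c))
    (hN : Tendsto (fun y => N y / (∫ x in Ioi y, deriv c x) ^ 2) atTop (𝓝 0))
    (hp : ∀ K, 3 ≤ K → IsBoundaries c K (p K)) :
    Tendsto (fun K : ℕ => (K : ℝ) ^ 2 * N (p K (K - 1))) atTop (𝓝 0) := by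
  refine (hN.comp (tendsto_boundary_last_atTop hc
    (fun x => (hrange ▸ mem_range_self x : c x ∈ Ioo 0 1).2) hp)).congr' ?_
  filter_upwards [eventually_ge_atTop 3] with K hK
  rw [Function.comp_apply, integral_Ioi_of_hasDerivAt_of_tendsto hcd.continuous.continuousWithinAt
    (fun x _ => (hcd x).hasDerivAt) hc'.integrableOn (tendsto_atTop_of_range_eq_Ioo hc.monotone
    hrange), (hp K hK).one_sub_apply_last (by omega), div_pow, one_pow, div_div_eq_mul_div,
    div_one, mul_comm]

lemma tendsto_sq_mul_overload_left {N : ℝ → ℝ} (hc : StrictMono c)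
    (hcd : Differentiable ℝ c) (hrange : range c = Ioo 0 1) (hc' : Integrable (deriv c))
    (hN : Tendsto (fun y => N y / (∫ x in Iio y, deriv c x) ^ 2) atBot (𝓝 0))
    (hp : ∀ K, 3 ≤ K → IsBoundaries c K (p K)) :
    Tendsto (fun K : ℕ => (K : ℝ) ^ 2 * N (p K 1)) atTop (𝓝 0) := by
  refine (hN.comp (tendsto_boundary_one_atBot hc
    (fun x => (hrange ▸ mem_range_self x : c x ∈ Ioo 0 1).1) hp)).congr' ?_
  filter_upwards [eventually_ge_atTop 3] with K hK
  rw [Function.comp_apply, setIntegral_congr_set Iio_ae_eq_Iic,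
    integral_Iic_of_hasDerivAt_of_tendsto hcd.continuous.continuousWithinAt
    (fun x _ => (hcd x).hasDerivAt) hc'.integrableOn (tendsto_atBot_of_range_eq_Ioo hc.monotone
    hrange), sub_zero, (hp K hK).apply_one (by omega), div_pow, one_pow, div_div_eq_mul_div,
    div_one, mul_comm]

end Compressor

section Cell

variable {φ : ℝ → ℝ} {u v lo hi : ℝ}

lemma integral_mem_Icc_mul_sub (hφ : Continuous φ) (huv : u ≤ v)
    (h : ∀ x ∈ Icc u v, lo ≤ φ x ∧ φ x ≤ hi) :
    ∫ x in u..v, φ x ∈ Icc (lo * (v - u)) (hi * (v - u)) := by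
  constructor
  · simpa [mul_comm] using intervalIntegral.integral_mono_on (μ := volume) huv
      intervalIntegrable_const (hφ.intervalIntegrable u v) fun x hx => (h x hx).1
  · simpa [mul_comm] using intervalIntegral.integral_mono_on (μ := volume) huv
      (hφ.intervalIntegrable u v) intervalIntegrable_const fun x hx => (h x hx).2

lemma abs_integral_mem_Icc_mul_abs_sub (hφ : Continuous φ) (hlo : 0 ≤ lo)
    (h : ∀ x ∈ uIcc u v, lo ≤ φ x ∧ φ x ≤ hi) :
    |∫ x in u..v, φ x| ∈ Icc (lo * |v - u|) (hi * |v - u|) := by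
  wlog huv : u ≤ v generalizing u v
  · rw [intervalIntegral.integral_symm, abs_neg, abs_sub_comm]
    exact this (uIcc_comm u v ▸ h) (le_of_not_ge huv)
  have hI := integral_mem_Icc_mul_sub hφ huv fun x hx => h x (Icc_subset_uIcc hx)
  rwa [abs_of_nonneg (sub_nonneg.2 huv),
    abs_of_nonneg ((mul_nonneg hlo (sub_nonneg.2 huv)).trans hI.1)]

lemma abs_integral_le_integral_of_mem_Icc (hφ : Continuous φ) (h0 : ∀ x, 0 ≤ φ x) {A B : ℝ}
    (hu : u ∈ Icc A B) (hv : v ∈ Icc A B) : |∫ x in u..v, φ x| ≤ ∫ x in A..B, φ x := by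
  wlog huv : u ≤ v generalizing u v
  · rw [intervalIntegral.integral_symm, abs_neg]
    exact this hv hu (le_of_not_ge huv)
  rw [abs_of_nonneg (intervalIntegral.integral_nonneg huv fun x _ => h0 x)]
  exact intervalIntegral.integral_mono_interval hu.1 huv hv.2 (ae_of_all _ h0)
    (hφ.intervalIntegrable A B)

lemma integral_sq_sub_midpoint (A B : ℝ) :
    ∫ x in A..B, (x - (A + B) / 2) ^ 2 = (B - A) ^ 3 / 12 := by
  rw [intervalIntegral.integral_comp_sub_right (fun x => x ^ 2), integral_pow]
  ring

lemma abs_sub_le_of_mem_Icc {X ρ s t : ℝ} (hρ : 1 ≤ ρ) (hs : s ∈ Icc X (ρ * X))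
    (ht : t ∈ Icc X (ρ * X)) : |s - t| ≤ (ρ - 1) * t := by
  obtain ⟨hs1, hs2⟩ := hs
  obtain ⟨ht1, ht2⟩ := ht
  have : (ρ - 1) * X ≤ (ρ - 1) * t := mul_le_mul_of_nonneg_left ht1 (sub_nonneg.2 hρ)
  exact abs_sub_le_iff.2 ⟨by linarith, by linarith⟩

end Cell

def cellDistortion (G f : ℝ → ℝ) (A B : ℝ) : ℝ :=
  ∫ x in A..B, (G x - G ((A + B) / 2)) ^ 2 * f x

def BoundedRatioOn (r : ℝ) (φ : ℝ → ℝ) (s : Set ℝ) : Prop :=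
  ∃ a, 0 ≤ a ∧ ∀ x ∈ s, a ≤ φ x ∧ φ x ≤ r * a

section CellDistortion

variable {G γ f : ℝ → ℝ} {A B r : ℝ}

lemma cellDistortion_nonneg (hf0 : ∀ x, 0 ≤ f x) (hAB : A ≤ B) : 0 ≤ cellDistortion G f A B :=
  intervalIntegral.integral_nonneg hAB fun x _ => mul_nonneg (sq_nonneg _) (hf0 x)

lemma cellDistortion_le (hG : ∀ u v, |G v - G u| = |∫ t in u..v, γ t|) (hGc : Continuous G)
    (hγ : Continuous γ) (hγ0 : ∀ x, 0 ≤ γ x) (hf : Continuous f) (hf0 : ∀ x, 0 ≤ f x)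
    (hAB : A ≤ B) :
    cellDistortion G f A B ≤ (∫ x in A..B, γ x) ^ 2 * ∫ x in A..B, f x := by
  have hm : (A + B) / 2 ∈ Icc A B := ⟨by linarith, by linarith⟩
  rw [← intervalIntegral.integral_const_mul]
  refine intervalIntegral.integral_mono_on hAB
    ((((hGc.sub continuous_const).pow 2).mul hf).intervalIntegrable A B)
    ((continuous_const.mul hf).intervalIntegrable A B) fun x hx => ?_
  refine mul_le_mul_of_nonneg_right ?_ (hf0 x)
  rw [← sq_abs, hG]
  exact pow_le_pow_left₀ (abs_nonneg _) (abs_integral_le_integral_of_mem_Icc hγ hγ0 hm hx) 2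

lemma twelve_mul_cellDistortion_mem_Icc (hG : ∀ u v, |G v - G u| = |∫ t in u..v, γ t|)
    (hGc : Continuous G) (hγ : Continuous γ) (hf : Continuous f) (hAB : A ≤ B) {a b : ℝ}
    (ha : 0 ≤ a) (hb : 0 ≤ b) (hγa : ∀ x ∈ Icc A B, a ≤ γ x ∧ γ x ≤ r * a)
    (hfb : ∀ x ∈ Icc A B, b ≤ f x ∧ f x ≤ r * b) :
    12 * cellDistortion G f A B ∈
      Icc (a ^ 2 * b * (B - A) ^ 3) (r ^ 3 * (a ^ 2 * b * (B - A) ^ 3)) := by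
  have hm : (A + B) / 2 ∈ Icc A B := ⟨by linarith, by linarith⟩
  set m := (A + B) / 2
  have hpt : ∀ x ∈ Icc A B, a ^ 2 * b * (x - m) ^ 2 ≤ (G x - G m) ^ 2 * f x ∧
      (G x - G m) ^ 2 * f x ≤ r ^ 3 * (a ^ 2 * b) * (x - m) ^ 2 := by
    intro x hx
    have hGx := hG m x ▸ abs_integral_mem_Icc_mul_abs_sub hγ ha fun y hy =>
      hγa y (uIcc_subset_Icc hm hx hy)
    rw [← sq_abs (G x - G m), ← sq_abs (x - m)]
    constructor
    · calc a ^ 2 * b * |x - m| ^ 2 = (a * |x - m|) ^ 2 * b := by ring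
        _ ≤ |G x - G m| ^ 2 * f x :=
          mul_le_mul (pow_le_pow_left₀ (by positivity) hGx.1 2) (hfb x hx).1 hb (by positivity)
    · calc |G x - G m| ^ 2 * f x ≤ (r * a * |x - m|) ^ 2 * (r * b) :=
            mul_le_mul (pow_le_pow_left₀ (abs_nonneg _) hGx.2 2) (hfb x hx).2
              (hb.trans (hfb x hx).1) (sq_nonneg _)
        _ = r ^ 3 * (a ^ 2 * b) * |x - m| ^ 2 := by ring
  have hint : ∀ k : ℝ, IntervalIntegrable (fun x => k * (x - m) ^ 2) volume A B := fun k =>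
    (continuous_const.mul ((continuous_id.sub continuous_const).pow 2)).intervalIntegrable A B
  have hDint : IntervalIntegrable (fun x => (G x - G m) ^ 2 * f x) volume A B :=
    (((hGc.sub continuous_const).pow 2).mul hf).intervalIntegrable A B
  have hlo := intervalIntegral.integral_mono_on hAB (hint _) hDint fun x hx => (hpt x hx).1
  have hhi := intervalIntegral.integral_mono_on hAB hDint (hint _) fun x hx => (hpt x hx).2
  rw [intervalIntegral.integral_const_mul, integral_sq_sub_midpoint] at hlo hhi
  exact ⟨by unfold cellDistortion; linarith, by unfold cellDistortion; linarith⟩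

lemma sq_integral_mul_integral_mem_Icc (hγ : Continuous γ) (hf : Continuous f) (hAB : A ≤ B)
    {a b : ℝ} (ha : 0 ≤ a) (hb : 0 ≤ b) (hγa : ∀ x ∈ Icc A B, a ≤ γ x ∧ γ x ≤ r * a)
    (hfb : ∀ x ∈ Icc A B, b ≤ f x ∧ f x ≤ r * b) :
    (∫ x in A..B, γ x) ^ 2 * ∫ x in A..B, f x ∈
      Icc (a ^ 2 * b * (B - A) ^ 3) (r ^ 3 * (a ^ 2 * b * (B - A) ^ 3)) := by
  have hJ := integral_mem_Icc_mul_sub hγ hAB hγa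
  have hF := integral_mem_Icc_mul_sub hf hAB hfb
  have hL : 0 ≤ B - A := sub_nonneg.2 hAB
  constructor
  · calc a ^ 2 * b * (B - A) ^ 3 = (a * (B - A)) ^ 2 * (b * (B - A)) := by ring
      _ ≤ _ := mul_le_mul (pow_le_pow_left₀ (mul_nonneg ha hL) hJ.1 2) hF.1
        (mul_nonneg hb hL) (sq_nonneg _)
  · calc (∫ x in A..B, γ x) ^ 2 * ∫ x in A..B, f x
        ≤ (r * a * (B - A)) ^ 2 * (r * b * (B - A)) :=
          mul_le_mul (pow_le_pow_left₀ ((mul_nonneg ha hL).trans hJ.1) hJ.2 2) hF.2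
            ((mul_nonneg hb hL).trans hF.1) (sq_nonneg _)
      _ = _ := by ring

theorem abs_twelve_mul_cellDistortion_sub_le (hG : ∀ u v, |G v - G u| = |∫ t in u..v, γ t|)
    (hGc : Continuous G) (hγ : Continuous γ) (hf : Continuous f) (hAB : A ≤ B) (hr : 1 ≤ r)
    (hγr : BoundedRatioOn r γ (Icc A B)) (hfr : BoundedRatioOn r f (Icc A B)) :
    |12 * cellDistortion G f A B - (∫ x in A..B, γ x) ^ 2 * ∫ x in A..B, f x| ≤
      (r ^ 3 - 1) * ((∫ x in A..B, γ x) ^ 2 * ∫ x in A..B, f x) := by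
  obtain ⟨a, ha, hγa⟩ := hγr
  obtain ⟨b, hb, hfb⟩ := hfr
  exact abs_sub_le_of_mem_Icc (one_le_pow₀ hr)
    (twelve_mul_cellDistortion_mem_Icc hG hGc hγ hf hAB ha hb hγa hfb)
    (sq_integral_mul_integral_mem_Icc hγ hf hAB ha hb hγa hfb)

end CellDistortion

section Regularity

variable {φ : ℝ → ℝ} {s : Set ℝ} {r : ℝ}

lemma exists_pos_forall_le_mul_of_dist_le (hs : IsCompact s) (hφ : ContinuousOn φ s)
    (hpos : ∀ x ∈ s, 0 < φ x) (hr : 1 < r) :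
    ∃ η > 0, ∀ x ∈ s, ∀ y ∈ s, dist x y ≤ η → φ x ≤ r * φ y := by
  obtain ⟨δ, hδ, hφδ⟩ := hs.exists_forall_le' hφ hpos
  obtain ⟨η, hη, hφη⟩ := Metric.uniformContinuousOn_iff_le.1
    (hs.uniformContinuousOn_of_continuous hφ) ((r - 1) * δ) (mul_pos (sub_pos.2 hr) hδ)
  refine ⟨η, hη, fun x hx y hy hxy => ?_⟩
  have h1 := (abs_le.1 (Real.dist_eq _ _ ▸ hφη x hx y hy hxy)).2
  have h2 := mul_le_mul_of_nonneg_left (hφδ y hy) (sub_nonneg.2 hr.le)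
  linarith

lemma boundedRatioOn_of_forall_le_mul (hs : IsCompact s) (hne : s.Nonempty)
    (hφ : ContinuousOn φ s) (h0 : ∀ x ∈ s, 0 ≤ φ x) (h : ∀ x ∈ s, ∀ y ∈ s, φ x ≤ r * φ y) :
    BoundedRatioOn r φ s := by
  obtain ⟨x₀, hx₀, hmin⟩ := hs.exists_isMinOn hne hφ
  exact ⟨φ x₀, h0 x₀ hx₀, fun x hx => ⟨hmin hx, h x hx x₀ hx₀⟩⟩

lemma Icc_subset_Ioo_of_sub_lt {c : ℝ → ℝ} (hc : Monotone c) {t h κ A B : ℝ}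
    (hleft : κ ≤ c t - c (t - h)) (hright : κ ≤ c (t + h) - c t) (ht : t ∈ Icc A B)
    (hcAB : c B - c A < κ) : Icc A B ⊆ Ioo (t - h) (t + h) := by
  intro x hx
  constructor
  · by_contra! H
    linarith [hc (hx.1.trans H), hc ht.2]
  · by_contra! H
    linarith [hc (H.trans hx.2), hc ht.1]

/-- Cells of small `c`-increment meeting `[-M, M]` are short and lie in `[-(M+1), M+1]`, where
the positive continuous `γ` and `f` are uniformly continuous and bounded below. -/
theorem exists_pos_forall_boundedRatioOn {γ f c : ℝ → ℝ} (hγ : Continuous γ)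
    (hγpos : ∀ x, 0 < γ x) (hf : Continuous f) (hfpos : ∀ x, 0 < f x) (hc : StrictMono c)
    (hcc : Continuous c) (hr : 1 < r) (M : ℝ) :
    ∃ κ > 0, ∀ A B, A ≤ B → c B - c A < κ → (Ioc A B ∩ Icc (-M) M).Nonempty →
      BoundedRatioOn r γ (Icc A B) ∧ BoundedRatioOn r f (Icc A B) := by
  obtain ⟨η₁, hη₁, hγη⟩ := exists_pos_forall_le_mul_of_dist_le (isCompact_Icc (a := -(M + 1))
    (b := M + 1)) hγ.continuousOn (fun x _ => hγpos x) hr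
  obtain ⟨η₂, hη₂, hfη⟩ := exists_pos_forall_le_mul_of_dist_le (isCompact_Icc (a := -(M + 1))
    (b := M + 1)) hf.continuousOn (fun x _ => hfpos x) hr
  set h := min (min η₁ η₂) 1 / 2
  have hh : 0 < h := by positivity
  have h2h : 2 * h = min (min η₁ η₂) 1 := by simp only [h]; ring
  have hh₁ : 2 * h ≤ η₁ := by linarith [min_le_left (min η₁ η₂) 1, min_le_left η₁ η₂]
  have hh₂ : 2 * h ≤ η₂ := by linarith [min_le_left (min η₁ η₂) 1, min_le_right η₁ η₂]
  have hh1 : 2 * h ≤ 1 := by linarith [min_le_right (min η₁ η₂) 1]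
  obtain ⟨κ, hκ, hcκ⟩ := (isCompact_Icc (a := -M - h) (b := M)).exists_forall_le'
    ((hcc.comp (continuous_add_const h)).sub hcc).continuousOn
    fun s _ => sub_pos.2 (hc (lt_add_of_pos_right s hh))
  refine ⟨κ, hκ, fun A B hAB hcAB ⟨t, htAB, htM⟩ => ?_⟩
  have hcell := Icc_subset_Ioo_of_sub_lt hc.monotone
    (by simpa using hcκ (t - h) ⟨by linarith [htM.1], by linarith [htM.2]⟩)
    (hcκ t ⟨by linarith [htM.1], htM.2⟩) (Ioc_subset_Icc_self htAB) hcAB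
  have hC : ∀ x ∈ Icc A B, x ∈ Icc (-(M + 1)) (M + 1) := fun x hx =>
    ⟨by linarith [(hcell hx).1, htM.1], by linarith [(hcell hx).2, htM.2]⟩
  have hdist : ∀ x ∈ Icc A B, ∀ y ∈ Icc A B, dist x y ≤ 2 * h := fun x hx y hy => by
    rw [Real.dist_eq, abs_le]
    constructor <;> linarith [(hcell hx).1, (hcell hx).2, (hcell hy).1, (hcell hy).2]
  exact ⟨boundedRatioOn_of_forall_le_mul isCompact_Icc (nonempty_Icc.2 hAB) hγ.continuousOn
      (fun x _ => (hγpos x).le) fun x hx y hy =>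
        hγη x (hC x hx) y (hC y hy) ((hdist x hx y hy).trans hh₁),
    boundedRatioOn_of_forall_le_mul isCompact_Icc (nonempty_Icc.2 hAB) hf.continuousOn
      (fun x _ => (hfpos x).le) fun x hx y hy =>
        hfη x (hC x hx) y (hC y hy) ((hdist x hx y hy).trans hh₂)⟩

end Regularity

section Granular

variable {G γ f c : ℝ → ℝ}

lemma sum_integral_cells (q : ℕ → ℝ) {n : ℕ} {φ : ℝ → ℝ}
    (hφ : ∀ j < n, IntervalIntegrable φ volume (q (j + 1)) (q (j + 2))) :
    ∑ j ∈ Finset.range n, ∫ x in q (j + 1)..q (j + 2), φ x = ∫ x in q 1..q (n + 1), φ x :=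
  intervalIntegral.sum_integral_adjacent_intervals (a := fun j => q (j + 1)) hφ

lemma intervalIntegral_le_integral {a b : ℝ} (hab : a ≤ b) (hfi : Integrable f)
    (hf0 : ∀ x, 0 ≤ f x) : ∫ x in a..b, f x ≤ ∫ x, f x := by
  rw [intervalIntegral.integral_of_le hab]
  exact setIntegral_le_integral hfi (ae_of_all _ hf0)

lemma tendsto_integral_indicator_compl_Icc (hfi : Integrable f) :
    Tendsto (fun M : ℝ => ∫ x, (Icc (-M) M)ᶜ.indicator f x) atTop (𝓝 0) := by
  have h := (tendsto_const_nhds (x := ∫ x, f x)).sub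
    (intervalIntegral_tendsto_integral hfi tendsto_neg_atTop_atBot tendsto_id)
  rw [sub_self] at h
  refine h.congr' ?_
  filter_upwards [eventually_ge_atTop 0] with M hM
  rw [integral_indicator measurableSet_Icc.compl, id, intervalIntegral.integral_of_le (by linarith),
    ← integral_Icc_eq_integral_Ioc, ← integral_add_compl measurableSet_Icc hfi, add_sub_cancel_left]

/-- Cells missing `S` are controlled by the crude bound `cellDistortion ≤ (∫ γ)² ∫ f`. -/
lemma abs_twelve_mul_cellDistortion_sub_le_add {A B r : ℝ} {S : Set ℝ}
    (hG : ∀ u v, |G v - G u| = |∫ t in u..v, γ t|) (hGc : Continuous G) (hγ : Continuous γ)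
    (hγ0 : ∀ x, 0 ≤ γ x) (hf : Continuous f) (hf0 : ∀ x, 0 ≤ f x) (hAB : A ≤ B) (hr : 1 ≤ r)
    (hreg : (Ioc A B ∩ S).Nonempty →
      BoundedRatioOn r γ (Icc A B) ∧ BoundedRatioOn r f (Icc A B)) :
    |12 * cellDistortion G f A B - (∫ x in A..B, γ x) ^ 2 * ∫ x in A..B, f x| ≤
      (r ^ 3 - 1) * ((∫ x in A..B, γ x) ^ 2 * ∫ x in A..B, f x) +
        12 * (∫ x in A..B, γ x) ^ 2 * ∫ x in A..B, Sᶜ.indicator f x := by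
  have hF : 0 ≤ ∫ x in A..B, f x := intervalIntegral.integral_nonneg hAB fun x _ => hf0 x
  have hJF : 0 ≤ (∫ x in A..B, γ x) ^ 2 * ∫ x in A..B, f x := mul_nonneg (sq_nonneg _) hF
  have hr3 : 0 ≤ r ^ 3 - 1 := sub_nonneg.2 (one_le_pow₀ hr)
  by_cases hmeet : (Ioc A B ∩ S).Nonempty
  · have hO : 0 ≤ ∫ x in A..B, Sᶜ.indicator f x :=
      intervalIntegral.integral_nonneg hAB fun x _ => indicator_nonneg (fun y _ => hf0 y) x
    have := abs_twelve_mul_cellDistortion_sub_le hG hGc hγ hf hAB hr (hreg hmeet).1 (hreg hmeet).2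
    nlinarith [sq_nonneg (∫ x in A..B, γ x)]
  · have hO : ∫ x in A..B, Sᶜ.indicator f x = ∫ x in A..B, f x := by
      refine intervalIntegral.integral_congr_ae (ae_of_all _ fun x hx => ?_)
      rw [uIoc_of_le hAB] at hx
      exact indicator_of_mem (show x ∈ Sᶜ from fun hS => hmeet ⟨x, hx, hS⟩) f
    have h0 := cellDistortion_nonneg (G := G) hf0 hAB
    have h1 := cellDistortion_le hG hGc hγ hγ0 hf hf0 hAB
    rw [hO, abs_sub_le_iff]
    constructor <;> nlinarith

lemma abs_twelve_mul_sq_mul_cellDistortion_sub_le_add {A B r k : ℝ} {S : Set ℝ}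
    (hG : ∀ u v, |G v - G u| = |∫ t in u..v, γ t|) (hGc : Continuous G) (hγ : Continuous γ)
    (hγ0 : ∀ x, 0 ≤ γ x) (hf : Continuous f) (hf0 : ∀ x, 0 ≤ f x) (hAB : A ≤ B) (hr : 1 ≤ r)
    (hreg : (Ioc A B ∩ S).Nonempty →
      BoundedRatioOn r γ (Icc A B) ∧ BoundedRatioOn r f (Icc A B)) :
    |12 * (k ^ 2 * cellDistortion G f A B) - (k * ∫ x in A..B, γ x) ^ 2 * ∫ x in A..B, f x| ≤
      (r ^ 3 - 1) * ((k * ∫ x in A..B, γ x) ^ 2 * ∫ x in A..B, f x) +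
        12 * (k * ∫ x in A..B, γ x) ^ 2 * ∫ x in A..B, Sᶜ.indicator f x := by
  have h := mul_le_mul_of_nonneg_left
    (abs_twelve_mul_cellDistortion_sub_le_add hG hGc hγ hγ0 hf hf0 hAB hr hreg) (sq_nonneg k)
  rw [← abs_of_nonneg (sq_nonneg k), ← abs_mul, abs_of_nonneg (sq_nonneg k)] at h
  calc _ = |k ^ 2 * (12 * cellDistortion G f A B -
        (∫ x in A..B, γ x) ^ 2 * ∫ x in A..B, f x)| := by congr 1; ring
    _ ≤ _ := h
    _ = _ := by ring

variable {p : ℕ → ℕ → ℝ} {K : ℕ} {q : ℕ → ℝ} {r : ℝ} {S : Set ℝ}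

theorem abs_twelve_mul_sum_cellDistortion_sub_le (hG : ∀ u v, |G v - G u| = |∫ t in u..v, γ t|)
    (hGc : Continuous G) (hγ : Continuous γ) (hγ0 : ∀ x, 0 ≤ γ x)
    (hcγ : ∀ u v, ∫ t in u..v, γ t = (∫ t, γ t) * (c v - c u)) (hc : StrictMono c)
    (hf : Continuous f) (hf0 : ∀ x, 0 ≤ f x) (hfi : Integrable f) (hS : MeasurableSet S)
    (hK : 3 ≤ K) (hq : IsBoundaries c K q) (hr : 1 ≤ r)
    (hreg : ∀ A B, A ≤ B → c B - c A = 1 / K → (Ioc A B ∩ S).Nonempty →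
      BoundedRatioOn r γ (Icc A B) ∧ BoundedRatioOn r f (Icc A B)) :
    |12 * ∑ j ∈ Finset.range (K - 2), (K : ℝ) ^ 2 * cellDistortion G f (q (j + 1)) (q (j + 2)) -
        (∫ t, γ t) ^ 2 * ∫ x in q 1..q (K - 1), f x| ≤
      (r ^ 3 - 1) * ((∫ t, γ t) ^ 2 * ∫ x, f x) + 12 * (∫ t, γ t) ^ 2 * ∫ x, Sᶜ.indicator f x := by
  set I := ∫ t, γ t
  have hK0 : (K : ℝ) ≠ 0 := by exact_mod_cast (by omega : K ≠ 0)
  have hsum : ∀ φ : ℝ → ℝ, Integrable φ → ∑ j ∈ Finset.range (K - 2),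
      ∫ x in q (j + 1)..q (j + 2), φ x = ∫ x in q 1..q (K - 1), φ x := fun φ hφ => by
    rw [sum_integral_cells q fun j _ => hφ.intervalIntegrable, show K - 2 + 1 = K - 1 by omega]
  have hcell : ∀ j ∈ Finset.range (K - 2),
      |12 * ((K : ℝ) ^ 2 * cellDistortion G f (q (j + 1)) (q (j + 2))) -
        I ^ 2 * ∫ x in q (j + 1)..q (j + 2), f x| ≤
      (r ^ 3 - 1) * (I ^ 2 * ∫ x in q (j + 1)..q (j + 2), f x) +
        12 * I ^ 2 * ∫ x in q (j + 1)..q (j + 2), Sᶜ.indicator f x := by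
    intro j hj
    have hj' : j + 2 ≤ K - 1 := by rw [Finset.mem_range] at hj; omega
    have hle : q (j + 1) ≤ q (j + 2) :=
      hq.monotoneOn hc ⟨by omega, by omega⟩ ⟨by omega, hj'⟩ (by omega)
    have hJ : (K : ℝ) * ∫ t in q (j + 1)..q (j + 2), γ t = I := by
      rw [hcγ, hq.sub_eq hj']
      field_simp
    rw [← hJ]
    exact abs_twelve_mul_sq_mul_cellDistortion_sub_le_add hG hGc hγ hγ0 hf hf0 hle hr
      (hreg _ _ hle (hq.sub_eq hj'))
  have h1K : q 1 ≤ q (K - 1) := hq.monotoneOn hc ⟨le_rfl, by omega⟩ ⟨by omega, le_rfl⟩ (by omega)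
  calc _ = |∑ j ∈ Finset.range (K - 2),
        (12 * ((K : ℝ) ^ 2 * cellDistortion G f (q (j + 1)) (q (j + 2))) -
          I ^ 2 * ∫ x in q (j + 1)..q (j + 2), f x)| := by
        rw [← hsum f hfi, Finset.mul_sum, Finset.mul_sum, ← Finset.sum_sub_distrib]
    _ ≤ ∑ j ∈ Finset.range (K - 2), ((r ^ 3 - 1) * (I ^ 2 * ∫ x in q (j + 1)..q (j + 2), f x) +
        12 * I ^ 2 * ∫ x in q (j + 1)..q (j + 2), Sᶜ.indicator f x) :=
      (Finset.abs_sum_le_sum_abs _ _).trans (Finset.sum_le_sum hcell)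
    _ = (r ^ 3 - 1) * (I ^ 2 * ∫ x in q 1..q (K - 1), f x) +
        12 * I ^ 2 * ∫ x in q 1..q (K - 1), Sᶜ.indicator f x := by
      rw [Finset.sum_add_distrib, ← Finset.mul_sum, ← Finset.mul_sum, ← Finset.mul_sum, hsum f hfi,
        hsum _ (hfi.indicator hS.compl)]
    _ ≤ _ := by
      gcongr
      · exact sub_nonneg.2 (one_le_pow₀ hr)
      · exact intervalIntegral_le_integral h1K hfi hf0
      · exact intervalIntegral_le_integral h1K (hfi.indicator hS.compl)
          fun x => indicator_nonneg (fun y _ => hf0 y) x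

theorem tendsto_sum_sq_mul_cellDistortion (hG : ∀ u v, |G v - G u| = |∫ t in u..v, γ t|)
    (hGc : Continuous G) (hγ : Continuous γ) (hγpos : ∀ x, 0 < γ x)
    (hcγ : ∀ u v, ∫ t in u..v, γ t = (∫ t, γ t) * (c v - c u)) (hc : StrictMono c)
    (hcc : Continuous c) (hc01 : ∀ x, c x ∈ Ioo 0 1) (hf : Continuous f) (hfpos : ∀ x, 0 < f x)
    (hfi : Integrable f) (hp : ∀ K, 3 ≤ K → IsBoundaries c K (p K)) :
    Tendsto (fun K : ℕ => ∑ j ∈ Finset.range (K - 2),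
        (K : ℝ) ^ 2 * cellDistortion G f (p K (j + 1)) (p K (j + 2)))
      atTop (𝓝 ((∫ t, γ t) ^ 2 * (∫ x, f x) / 12)) := by
  set I := ∫ t, γ t
  set T := fun K : ℕ => ∫ x in p K 1..p K (K - 1), f x
  have hT : Tendsto T atTop (𝓝 (∫ x, f x)) := intervalIntegral_tendsto_integral hfi
    (tendsto_boundary_one_atBot hc (fun x => (hc01 x).1) hp)
    (tendsto_boundary_last_atTop hc (fun x => (hc01 x).2) hp)
  suffices h : Tendsto (fun K : ℕ => 12 * ∑ j ∈ Finset.range (K - 2),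
      (K : ℝ) ^ 2 * cellDistortion G f (p K (j + 1)) (p K (j + 2)) - I ^ 2 * T K) atTop (𝓝 0) by
    convert (h.add (hT.const_mul (I ^ 2))).div_const 12 using 1
    · ext K; ring
    · rw [zero_add]
  rw [Metric.tendsto_nhds]
  intro ε hε
  have hrlim : Tendsto (fun r : ℝ => (r ^ 3 - 1) * (I ^ 2 * ∫ x, f x)) (𝓝[>] 1) (𝓝 0) := by
    have : Continuous fun r : ℝ => (r ^ 3 - 1) * (I ^ 2 * ∫ x, f x) := by fun_prop
    simpa using (this.tendsto 1).mono_left nhdsWithin_le_nhds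
  obtain ⟨r, hrε, hr⟩ :=
    ((hrlim.eventually (gt_mem_nhds (half_pos hε))).and self_mem_nhdsWithin).exists
  have htail := (tendsto_integral_indicator_compl_Icc hfi).const_mul (12 * I ^ 2)
  rw [mul_zero] at htail
  obtain ⟨M, hM⟩ := (htail.eventually (gt_mem_nhds (half_pos hε))).exists
  obtain ⟨κ, hκ, hreg⟩ := exists_pos_forall_boundedRatioOn hγ hγpos hf hfpos hc hcc hr M
  filter_upwards [eventually_ge_atTop 3,
    tendsto_one_div_atTop_nhds_zero_nat.eventually (gt_mem_nhds hκ)] with K hK hKκ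
  rw [Real.dist_eq, sub_zero]
  refine (abs_twelve_mul_sum_cellDistortion_sub_le hG hGc hγ (fun x => (hγpos x).le) hcγ hc hf
    (fun x => (hfpos x).le) hfi measurableSet_Icc hK (hp K hK) hr.le
    fun A B hAB hcAB => hreg A B hAB (hcAB ▸ hKκ)).trans_lt ?_
  linarith

end Granular

section Quantizer

variable {G f Q : ℝ → ℝ} {K : ℕ} {q : ℕ → ℝ}

lemma intervalIntegrable_and_integral_eq_sum_cellDistortion (hK : 3 ≤ K)
    (hq : MonotoneOn q (Icc 1 (K - 1))) (hQ : IsCompanderQuantizer K q Q)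
    (hint : ∀ v, Integrable fun x => (G x - G v) ^ 2 * f x) :
    IntervalIntegrable (fun x => (G x - G (Q x)) ^ 2 * f x) volume (q 1) (q (K - 1)) ∧
      ∫ x in q 1..q (K - 1), (G x - G (Q x)) ^ 2 * f x =
        ∑ j ∈ Finset.range (K - 2), cellDistortion G f (q (j + 1)) (q (j + 2)) := by
  have hle : ∀ j < K - 2, q (j + 1) ≤ q (j + 2) := fun j hj =>
    hq ⟨by omega, by omega⟩ ⟨by omega, by omega⟩ (by omega)
  have hcell : ∀ j < K - 2, EqOn (fun x => (G x - G (Q x)) ^ 2 * f x)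
      (fun x => (G x - G ((q (j + 1) + q (j + 2)) / 2)) ^ 2 * f x)
      (Ioc (q (j + 1)) (q (j + 2))) := fun j hj x hx => by
    simp only [hQ.2.2 (j + 2) (by omega) (by omega) x hx]
    rfl
  have hII : ∀ j < K - 2, IntervalIntegrable (fun x => (G x - G (Q x)) ^ 2 * f x) volume
      (q (j + 1)) (q (j + 2)) := fun j hj =>
    (intervalIntegrable_iff_integrableOn_Ioc_of_le (hle j hj)).2
      ((hint _).integrableOn.congr_fun (hcell j hj).symm measurableSet_Ioc)
  have hlast : K - 2 + 1 = K - 1 := by omega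
  refine ⟨hlast ▸ IntervalIntegrable.trans_iterate (a := fun j => q (j + 1)) hII, ?_⟩
  rw [← hlast, ← sum_integral_cells q hII]
  refine Finset.sum_congr rfl fun j hj => intervalIntegral.integral_congr_ae (ae_of_all _ ?_)
  intro x hx
  rw [uIoc_of_le (hle j (Finset.mem_range.1 hj))] at hx
  exact hcell j (Finset.mem_range.1 hj) hx

theorem integral_eq_overload_add_sum_cellDistortion (hK : 3 ≤ K)
    (hq : MonotoneOn q (Icc 1 (K - 1))) (hQ : IsCompanderQuantizer K q Q)
    (hint : ∀ v, Integrable fun x => (G x - G v) ^ 2 * f x) :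
    ∫ x, (G x - G (Q x)) ^ 2 * f x =
      (∫ x in Iio (q 1), (G x - G (q 1)) ^ 2 * f x) +
        ∑ j ∈ Finset.range (K - 2), cellDistortion G f (q (j + 1)) (q (j + 2)) +
        ∫ x in Ioi (q (K - 1)), (G x - G (q (K - 1))) ^ 2 * f x := by
  set H := fun x => (G x - G (Q x)) ^ 2 * f x
  have h1K : q 1 ≤ q (K - 1) := hq ⟨le_rfl, by omega⟩ ⟨by omega, le_rfl⟩ (by omega)
  obtain ⟨hmidi, hmid⟩ := intervalIntegrable_and_integral_eq_sum_cellDistortion hK hq hQ hint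
  have hleft : EqOn H (fun x => (G x - G (q 1)) ^ 2 * f x) (Iic (q 1)) := fun x hx => by
    simp only [H, hQ.1 x hx]
  have hright : EqOn H (fun x => (G x - G (q (K - 1))) ^ 2 * f x) (Ioi (q (K - 1))) :=
    fun x hx => by simp only [H, hQ.2.1 x hx]
  have hIic : IntegrableOn H (Iic (q 1)) :=
    (hint _).integrableOn.congr_fun hleft.symm measurableSet_Iic
  have hIicK : IntegrableOn H (Iic (q (K - 1))) := by
    rw [← Iic_union_Ioc_eq_Iic h1K]
    exact hIic.union ((intervalIntegrable_iff_integrableOn_Ioc_of_le h1K).1 hmidi)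
  have hIoi : IntegrableOn H (Ioi (q (K - 1))) :=
    (hint _).integrableOn.congr_fun hright.symm measurableSet_Ioi
  rw [← intervalIntegral.integral_Iic_add_Ioi hIicK hIoi,
    ← sub_add_cancel (∫ x in Iic (q (K - 1)), H x) (∫ x in Iic (q 1), H x),
    intervalIntegral.integral_Iic_sub_Iic hIic hIicK, hmid, setIntegral_congr_set Iio_ae_eq_Iic,
    setIntegral_congr_fun measurableSet_Iic hleft, setIntegral_congr_fun measurableSet_Ioi hright]
  ring

end Quantizer

lemma integrable_sq_sub_mul {G γ f : ℝ → ℝ} (hG : ∀ u v, |G v - G u| = |∫ t in u..v, γ t|)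
    (hGc : Continuous G) (hγ0 : ∀ x, 0 ≤ γ x) (hγi : Integrable γ) (hf : Continuous f)
    (hfi : Integrable f) (v : ℝ) : Integrable fun x => (G x - G v) ^ 2 * f x := by
  refine (hfi.norm.const_mul ((∫ t, γ t) ^ 2)).mono'
    (((hGc.sub continuous_const).pow 2).mul hf).aestronglyMeasurable (ae_of_all _ fun x => ?_)
  have hGx : |G x - G v| ≤ ∫ t, γ t := by
    rw [hG, ← Real.norm_eq_abs]
    refine intervalIntegral.norm_integral_le_integral_norm_uIoc.trans ?_
    exact setIntegral_le_integral hγi.norm (ae_of_all _ fun _ => norm_nonneg _) |>.trans_eq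
      (integral_congr_ae (ae_of_all _ fun t => Real.norm_of_nonneg (hγ0 t)))
  rw [norm_mul, norm_pow, Real.norm_eq_abs]
  gcongr

lemma abs_abs_deriv_sub_le {g : ℝ → ℝ} {C : ℝ} (hg : ContDiff ℝ 2 g)
    (hg'' : ∀ x, |deriv (deriv g) x| ≤ C) (x y : ℝ) :
    |(|deriv g x| - |deriv g y|)| ≤ C * |x - y| := by
  have hd : Differentiable ℝ (deriv g) := by
    have : ContDiff ℝ (1 + 1) g := hg
    exact (contDiff_succ_iff_deriv.1 this).2.2.differentiable one_ne_zero
  refine (abs_abs_sub_abs_le_abs_sub _ _).trans ?_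
  simpa [Real.norm_eq_abs] using Convex.norm_image_sub_le_of_norm_deriv_le
    (fun z _ => hd z) (fun z _ => hg'' z) convex_univ (mem_univ y) (mem_univ x)

lemma deriv_ne_zero_of_integrable_div_deriv_pow {f g c : ℝ → ℝ} {C : ℝ} {n : ℕ} (hn : n ≠ 0)
    (hg : ContDiff ℝ 2 g) (hg'' : ∀ x, |deriv (deriv g) x| ≤ C)
    (hpos : 0 < ∫ x, |deriv g x|) (hcderiv : ∀ x, deriv c x = |deriv g x| / ∫ t, |deriv g t|)
    (hf : Continuous f) (hfpos : ∀ x, 0 < f x) (hint : Integrable fun x => f x / deriv c x ^ n)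
    (x : ℝ) : deriv g x ≠ 0 := by
  obtain ⟨w, hw⟩ : ∃ w, deriv g w ≠ 0 := by
    by_contra! h
    simp [h] at hpos
  have hlip : ∀ x y, |deriv c x - deriv c y| ≤ C / (∫ t, |deriv g t|) * |x - y| := fun x y => by
    rw [hcderiv, hcderiv, ← sub_div, abs_div, abs_of_pos hpos, div_mul_eq_mul_div]
    exact div_le_div_of_nonneg_right (abs_abs_deriv_sub_le hg hg'' x y) hpos.le
  intro hx
  refine ne_zero_of_integrable_div_pow hn hlip hf hfpos hint (w := w)
    (by rw [hcderiv]; exact div_ne_zero (abs_ne_zero.2 hw) hpos.ne') x ?_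
  rw [hcderiv, hx, abs_zero, zero_div]

lemma integral_eq_mul_sub_of_deriv_eq_div {γ c : ℝ → ℝ} {I : ℝ} (hc : ContDiff ℝ 1 c)
    (hcγ : ∀ x, deriv c x = γ x / I) (hI : I ≠ 0) (u v : ℝ) :
    ∫ t in u..v, γ t = I * (c v - c u) := by
  rw [← intervalIntegral.integral_deriv_eq_sub' c rfl
    (fun x _ => (hc.differentiable one_ne_zero) x) (hc.continuous_deriv le_rfl).continuousOn,
    ← intervalIntegral.integral_const_mul]
  refine intervalIntegral.integral_congr fun t _ => ?_
  rw [hcγ]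
  field_simp

theorem stmt11_general (f g c : ℝ → ℝ) (Cu : ℝ)
    (p : ℕ → ℕ → ℝ) (Q : ℕ → ℝ → ℝ)
    (hc : IsCompressor c)
    -- λ* is well defined
    (hint : Integrable (fun x => |deriv g x|))
    (hpos : (0 : ℝ) < ∫ x : ℝ, |deriv g x|)
    -- the compressor has point density λ* = γ / ∫ γ
    (hcderiv : ∀ x, deriv c x = |deriv g x| / ∫ t : ℝ, |deriv g t|)
    -- UF1′
    (hf_cont : Continuous f) (hf_pos : ∀ x, 0 < f x)
    (hf_prob : (∫ x : ℝ, f x) = 1)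
    -- UF2′
    (hg : ContDiff ℝ 2 g)
    (hg'' : ∀ x, |deriv (deriv g) x| ≤ Cu)
    -- UF3′ for λ*
    (hUF3 : ∀ m : ℕ, m ≤ 2 →
      Integrable (fun x => f x * |deriv g x| ^ (2 - m) / (deriv c x) ^ (2 + m)))
    -- UF4′ for λ*
    (hUF4p : Tendsto (fun y =>
        (∫ x in Set.Ioi y, (g x - g y) ^ 2 * f x) /
          (∫ x in Set.Ioi y, deriv c x) ^ 2) atTop (𝓝 0))
    (hUF4m : Tendsto (fun y =>
        (∫ x in Set.Iio y, (g x - g y) ^ 2 * f x) /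
          (∫ x in Set.Iio y, deriv c x) ^ 2) atBot (𝓝 0))
    -- the family of compander quantizers for c
    (hp : ∀ K : ℕ, 3 ≤ K → IsBoundaries c K (p K))
    (hQ : ∀ K : ℕ, 3 ≤ K → IsCompanderQuantizer K (p K) (Q K)) :
    Tendsto (fun K : ℕ =>
        (K : ℝ) ^ 2 * ∫ x : ℝ, (g x - g (Q K x)) ^ 2 * f x)
      atTop
      (𝓝 ((1 / 12) * (∫ x : ℝ, |deriv g x|) ^ 2)) := by
  obtain ⟨hcmono, hc1, hrange, -⟩ := hc
  have hc1d : Differentiable ℝ c := hc1.differentiable one_ne_zero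
  have hg1 : Differentiable ℝ g := hg.differentiable two_ne_zero
  have hg'c : Continuous (deriv g) := hg.continuous_deriv one_le_two
  have hne := deriv_ne_zero_of_integrable_div_deriv_pow four_ne_zero hg hg'' hpos hcderiv hf_cont
    hf_pos (by simpa using hUF3 2 le_rfl)
  have hG := abs_sub_eq_abs_integral_abs_deriv hg1 hg'c hne
  have hfi : Integrable f := Integrable.of_integral_ne_zero (by rw [hf_prob]; exact one_ne_zero)
  have hcint : Integrable (deriv c) :=
    (hint.div_const _).congr (ae_of_all _ fun x => (hcderiv x).symm)
  have hL := tendsto_sq_mul_overload_left hcmono hc1d hrange hcint hUF4m hp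
  have hR := tendsto_sq_mul_overload_right hcmono hc1d hrange hcint hUF4p hp
  have hGr := tendsto_sum_sq_mul_cellDistortion hG hg1.continuous hg'c.abs
    (fun x => abs_pos.2 (hne x)) (integral_eq_mul_sub_of_deriv_eq_div hc1 hcderiv hpos.ne')
    hcmono hc1.continuous (fun x => hrange ▸ mem_range_self x) hf_cont hf_pos hfi hp
  rw [hf_prob, mul_one] at hGr
  rw [show 1 / 12 * (∫ x, |deriv g x|) ^ 2 = 0 + (∫ x, |deriv g x|) ^ 2 / 12 + 0 by ring]
  refine Tendsto.congr' ?_ ((hL.add hGr).add hR)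
  filter_upwards [eventually_ge_atTop 3] with K hK
  rw [integral_eq_overload_add_sum_cellDistortion hK ((hp K hK).monotoneOn hcmono) (hQ K hK)
    (integrable_sq_sub_mul hG hg1.continuous (fun _ => abs_nonneg _) hint hf_cont hfi),
    mul_add, mul_add, Finset.mul_sum]

/-- Entropy-constrained optimal univariate functional distortion: the point density
`λ*(x) = γ(x)/∫γ` (with `γ = |g'|`) gives `lim K² D(K) = (1/12)(∫ γ)²`. -/
theorem stmt11 (f g c : ℝ → ℝ) (Cu : ℝ)
    (p : ℕ → ℕ → ℝ) (Q : ℕ → ℝ → ℝ)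
    (hc : IsCompressor c)
    -- λ* is well defined
    (hint : Integrable (fun x => |deriv g x|))
    (hpos : (0 : ℝ) < ∫ x : ℝ, |deriv g x|)
    -- the compressor has point density λ* = γ / ∫ γ
    (hcderiv : ∀ x, deriv c x = |deriv g x| / ∫ t : ℝ, |deriv g t|)
    -- UF1′
    (hf_cont : Continuous f) (hf_pos : ∀ x, 0 < f x)
    (hf_prob : (∫ x : ℝ, f x) = 1)
    -- UF2′
    (hg : ContDiff ℝ 2 g)
    (hg' : ∀ x, |deriv g x| ≤ Cu) (hg'' : ∀ x, |deriv (deriv g) x| ≤ Cu)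
    -- UF3′ for λ*
    (hUF3 : ∀ m : ℕ, m ≤ 2 →
      Integrable (fun x => f x * |deriv g x| ^ (2 - m) / (deriv c x) ^ (2 + m)))
    -- UF4′ for λ*
    (hUF4p : Tendsto (fun y =>
        (∫ x in Set.Ioi y, (g x - g y) ^ 2 * f x) /
          (∫ x in Set.Ioi y, deriv c x) ^ 2) atTop (𝓝 0))
    (hUF4m : Tendsto (fun y =>
        (∫ x in Set.Iio y, (g x - g y) ^ 2 * f x) /
          (∫ x in Set.Iio y, deriv c x) ^ 2) atBot (𝓝 0))
    -- the family of compander quantizers for c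
    (hp : ∀ K : ℕ, 3 ≤ K → IsBoundaries c K (p K))
    (hQ : ∀ K : ℕ, 3 ≤ K → IsCompanderQuantizer K (p K) (Q K)) :
    Tendsto (fun K : ℕ =>
        (K : ℝ) ^ 2 * ∫ x : ℝ, (g x - g (Q K x)) ^ 2 * f x)
      atTop
      (𝓝 ((1 / 12) * (∫ x : ℝ, |deriv g x|) ^ 2)) :=
  stmt11_general f g c Cu p Q hc hint hpos hcderiv hf_cont hf_pos hf_prob hg hg'' hUF3 hUF4p hUF4m
    hp hQ
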